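/- Let f : (0,∞) → ℝ satisfy |f(t) − 1| ≤ C₁ t for all t > 0 and |f(t)| ≤ C₂ t^{−δ} for all t > 0, with δ > 0. Let a_k > 0 with a_k → 0, Σ a_k² = ∞, and set A_n = Σ_{k=1}^n a_k², b_k = exp(A_k + c_k) with sup|c_k| < ∞. Then there is a constant C such that for all n and all 0 < s ≤ 1: |Σ_{k=1}^n a_k² f(b_k s) − min(log(1/s), A_n)| ≤ C. -/

import Mathlib

open Real Finset

/-!
Write `s = e^{-L}`, so that `b_k s = e^{A_k - L + c_k}`, and split the sum at the last index `N`
with `A_N ≤ L`. For `k ≤ N` the bound `|f(t) - 1| ≤ C₁ t` makes `Σ a_k² (f(b_k s) - 1)` at most a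
constant times `e^{-L} Σ_{k ≤ N} a_k² e^{A_k} ≲ e^{A_N - L} ≤ 1`; for `k > N` the bound
`|f(t)| ≤ C₂ t^{-δ}` makes the tail at most a constant times `e^{δL} Σ_{k > N} a_k² e^{-δ A_k}
≲ e^{δ (L - A_N)}`, where `L - A_N < a_{N+1}²` is bounded. Both sums are controlled by comparing
`a_k² e^{α A_k}` with the telescoping differences `e^{α A_k} - e^{α A_{k-1}}`. What remains,
`A_N - min(L, A_n)`, is again at most `a_{N+1}²`.
-/

theorem sum_Ioc_le_sub_of_le_sub {u g : ℕ → ℝ} (h : ∀ k, u (k + 1) ≤ g (k + 1) - g k)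
    {m n : ℕ} (hmn : m ≤ n) : ∑ k ∈ Ioc m n, u k ≤ g n - g m := by
  induction n, hmn using Nat.le_induction with
  | base => simp
  | succ n hmn ih =>
    rw [sum_Ioc_succ_top hmn]
    linarith [h n]

theorem abs_sum_mul_le_mul_sum {ι : Type*} {s : Finset ι} {w u v : ι → ℝ} {C : ℝ}
    (hw : ∀ k, 0 ≤ w k) (hu : ∀ k ∈ s, |u k| ≤ C * v k) :
    |∑ k ∈ s, w k * u k| ≤ C * ∑ k ∈ s, w k * v k := by
  rw [mul_sum]
  refine (abs_sum_le_sum_abs _ _).trans (sum_le_sum fun k hk => ?_)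
  calc |w k * u k| = w k * |u k| := by rw [abs_mul, abs_of_nonneg (hw k)]
    _ ≤ w k * (C * v k) := mul_le_mul_of_nonneg_left (hu k hk) (hw k)
    _ = C * (w k * v k) := by ring

theorem mul_exp_add_le {x y M : ℝ} (hx : 0 ≤ x) (hxM : x ≤ M) :
    x * exp (y + x) ≤ exp M * (exp (y + x) - exp y) := by
  have hgap : x * exp y ≤ exp (y + x) - exp y := by
    rw [exp_add]
    nlinarith [add_one_le_exp x, exp_pos y]
  calc x * exp (y + x) = exp x * (x * exp y) := by rw [exp_add]; ring
    _ ≤ exp x * (exp (y + x) - exp y) := mul_le_mul_of_nonneg_left hgap (exp_pos x).le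
    _ ≤ exp M * (exp (y + x) - exp y) :=
      mul_le_mul_of_nonneg_right (exp_le_exp.2 hxM) ((mul_nonneg hx (exp_pos y).le).trans hgap)

theorem mul_exp_neg_add_le {x y δ : ℝ} (hδ : 0 < δ) :
    x * exp (-(δ * (y + x))) ≤ (exp (-(δ * y)) - exp (-(δ * (y + x)))) / δ := by
  have hsplit : exp (-(δ * y)) = exp (-(δ * (y + x))) * exp (δ * x) := by
    rw [← exp_add]; ring_nf
  rw [le_div_iff₀ hδ, hsplit]
  nlinarith [add_one_le_exp (δ * x), exp_pos (-(δ * (y + x)))]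

section Increments

variable {w A : ℕ → ℝ} {M : ℝ}

theorem sum_Ioc_mul_exp_le (hstep : ∀ k, A (k + 1) = A k + w (k + 1)) (hw : ∀ k, 0 ≤ w k)
    (hwM : ∀ k, w k ≤ M) {m n : ℕ} (hmn : m ≤ n) :
    ∑ k ∈ Ioc m n, w k * exp (A k) ≤ exp M * (exp (A n) - exp (A m)) := by
  rw [mul_sub]
  refine sum_Ioc_le_sub_of_le_sub (g := fun k => exp M * exp (A k)) (fun k => ?_) hmn
  rw [← mul_sub, hstep]
  exact mul_exp_add_le (hw _) (hwM _)

theorem sum_Ioc_mul_exp_neg_le {δ : ℝ} (hδ : 0 < δ) (hstep : ∀ k, A (k + 1) = A k + w (k + 1))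
    {m n : ℕ} (hmn : m ≤ n) :
    ∑ k ∈ Ioc m n, w k * exp (-(δ * A k)) ≤ (exp (-(δ * A m)) - exp (-(δ * A n))) / δ := by
  refine (sum_Ioc_le_sub_of_le_sub (g := fun k => -exp (-(δ * A k)) / δ) (fun k => ?_) hmn).trans
    (le_of_eq (by ring))
  rw [hstep]
  exact (mul_exp_neg_add_le hδ).trans (le_of_eq (by ring))

theorem abs_sum_Ioc_zero_mul_le (hstep : ∀ k, A (k + 1) = A k + w (k + 1))
    (hw : ∀ k, 0 ≤ w k) (hwM : ∀ k, w k ≤ M) {u : ℕ → ℝ} {C L : ℝ} {N : ℕ} (hC : 0 ≤ C)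
    (hu : ∀ k ∈ Ioc 0 N, |u k| ≤ C * exp (A k - L)) (hAN : A N ≤ L) :
    |∑ k ∈ Ioc 0 N, w k * u k| ≤ C * exp M := by
  have hu' : ∀ k ∈ Ioc 0 N, |u k| ≤ C * exp (-L) * exp (A k) := fun k hk => by
    rw [mul_assoc, ← exp_add, neg_add_eq_sub]; exact hu k hk
  have hfactor : exp (-L) * (exp (A N) - exp (A 0)) ≤ 1 := by
    rw [mul_sub, ← exp_add, neg_add_eq_sub]
    nlinarith [exp_le_one_iff.2 (sub_nonpos.2 hAN), exp_pos (-L), exp_pos (A 0)]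
  calc |∑ k ∈ Ioc 0 N, w k * u k| ≤ C * exp (-L) * ∑ k ∈ Ioc 0 N, w k * exp (A k) :=
        abs_sum_mul_le_mul_sum hw hu'
    _ ≤ C * exp (-L) * (exp M * (exp (A N) - exp (A 0))) :=
        mul_le_mul_of_nonneg_left (sum_Ioc_mul_exp_le hstep hw hwM (Nat.zero_le N)) (by positivity)
    _ = C * exp M * (exp (-L) * (exp (A N) - exp (A 0))) := by ring
    _ ≤ C * exp M := mul_le_of_le_one_right (by positivity) hfactor

theorem abs_sum_Ioc_mul_le {δ : ℝ} (hδ : 0 < δ) (hstep : ∀ k, A (k + 1) = A k + w (k + 1))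
    (hw : ∀ k, 0 ≤ w k) (hwM : ∀ k, w k ≤ M) {u : ℕ → ℝ} {C L : ℝ} {N n : ℕ} (hC : 0 ≤ C)
    (hu : ∀ k ∈ Ioc N n, |u k| ≤ C * exp (-(δ * (A k - L))))
    (hL : ∀ k ∈ Ioc N n, L < A k) :
    |∑ k ∈ Ioc N n, w k * u k| ≤ C * exp (δ * M) / δ := by
  rcases le_or_gt n N with hnN | hNn
  · rw [Ioc_eq_empty_of_le hnN, sum_empty, abs_zero]
    positivity
  have hLN : L - A N ≤ M := by
    linarith [hL (N + 1) (mem_Ioc.2 ⟨N.lt_succ_self, hNn⟩), hstep N, hwM (N + 1)]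
  have hu' : ∀ k ∈ Ioc N n, |u k| ≤ C * exp (δ * L) * exp (-(δ * A k)) := fun k hk => by
    rw [mul_assoc, ← exp_add]; convert hu k hk using 3; ring
  calc |∑ k ∈ Ioc N n, w k * u k|
        ≤ C * exp (δ * L) * ∑ k ∈ Ioc N n, w k * exp (-(δ * A k)) :=
        abs_sum_mul_le_mul_sum hw hu'
    _ ≤ C * exp (δ * L) * ((exp (-(δ * A N)) - exp (-(δ * A n))) / δ) :=
        mul_le_mul_of_nonneg_left (sum_Ioc_mul_exp_neg_le hδ hstep hNn.le) (by positivity)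
    _ ≤ C * exp (δ * L) * (exp (-(δ * A N)) / δ) := by
        gcongr
        linarith [exp_pos (-(δ * A n))]
    _ = C * exp (δ * (L - A N)) / δ := by rw [mul_sub, sub_eq_add_neg, exp_add]; ring
    _ ≤ C * exp (δ * M) / δ := by gcongr

theorem abs_sub_min_le (hstep : ∀ k, A (k + 1) = A k + w (k + 1)) (hw : ∀ k, 0 ≤ w k)
    (hwM : ∀ k, w k ≤ M) {L : ℝ} {N n : ℕ} (hNn : N ≤ n) (hAN : A N ≤ L)
    (hL : ∀ k ∈ Ioc N n, L < A k) : |A N - min L (A n)| ≤ M := by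
  have hM : 0 ≤ M := (hw 0).trans (hwM 0)
  rcases hNn.eq_or_lt with rfl | hNn
  · rwa [min_eq_right hAN, sub_self, abs_zero]
  have hLn : L ≤ A n := (hL n (mem_Ioc.2 ⟨hNn, le_rfl⟩)).le
  rw [min_eq_left hLn, abs_le]
  constructor
  · linarith [hL (N + 1) (mem_Ioc.2 ⟨N.lt_succ_self, hNn⟩), hstep N, hwM (N + 1)]
  · linarith

end Increments

theorem exists_last_le (A : ℕ → ℝ) (L : ℝ) (hA0 : A 0 ≤ L) (n : ℕ) :
    ∃ N ≤ n, A N ≤ L ∧ ∀ k ∈ Ioc N n, L < A k := by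
  classical
  refine ⟨Nat.findGreatest (fun k => A k ≤ L) n, Nat.findGreatest_le n,
    Nat.findGreatest_spec (P := fun k => A k ≤ L) (Nat.zero_le n) hA0, fun k hk => ?_⟩
  exact lt_of_not_ge (Nat.findGreatest_is_greatest (mem_Ioc.1 hk).1 (mem_Ioc.1 hk).2)

theorem abs_sub_one_le_mul_exp {f : ℝ → ℝ} {C₁ : ℝ} (hC₁ : 0 ≤ C₁)
    (hf1 : ∀ t : ℝ, 0 < t → |f t - 1| ≤ C₁ * t) {e K : ℝ} (he : |e| ≤ K) (x : ℝ) :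
    |f (exp (x + e)) - 1| ≤ C₁ * exp K * exp x := by
  refine (hf1 _ (exp_pos _)).trans ?_
  rw [mul_assoc, ← exp_add]
  exact mul_le_mul_of_nonneg_left (exp_le_exp.2 (by linarith [le_abs_self e])) hC₁

theorem abs_le_mul_exp_neg {f : ℝ → ℝ} {C₂ δ : ℝ} (hC₂ : 0 ≤ C₂) (hδ : 0 ≤ δ)
    (hf2 : ∀ t : ℝ, 0 < t → |f t| ≤ C₂ * t ^ (-δ)) {e K : ℝ} (he : |e| ≤ K) (x : ℝ) :
    |f (exp (x + e))| ≤ C₂ * exp (δ * K) * exp (-(δ * x)) := by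
  refine (hf2 _ (exp_pos _)).trans ?_
  rw [← exp_mul, mul_assoc, ← exp_add]
  exact mul_le_mul_of_nonneg_left (exp_le_exp.2 (by nlinarith [neg_abs_le e])) hC₂

theorem stmt_18_general (f : ℝ → ℝ) (C₁ C₂ δ : ℝ) (hδ : 0 < δ)
    (hf1 : ∀ t : ℝ, 0 < t → |f t - 1| ≤ C₁ * t)
    (hf2 : ∀ t : ℝ, 0 < t → |f t| ≤ C₂ * t ^ (-δ))
    (a : ℕ → ℝ)
    (halim : Filter.Tendsto a Filter.atTop (nhds 0))
    (A : ℕ → ℝ) (hA : ∀ n, A n = ∑ k ∈ Finset.Icc 1 n, (a k) ^ 2)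
    (c : ℕ → ℝ) (Cc : ℝ) (hc : ∀ k, |c k| ≤ Cc)
    (b : ℕ → ℝ) (hb : ∀ k, b k = Real.exp (A k + c k)) :
    ∃ C : ℝ, ∀ n : ℕ, ∀ s : ℝ, 0 < s → s ≤ 1 →
      |(∑ k ∈ Finset.Icc 1 n, (a k) ^ 2 * f (b k * s))
        - min (Real.log (1 / s)) (A n)| ≤ C := by
  obtain ⟨M, hM⟩ := (by simpa using halim.pow 2 : Filter.Tendsto (a · ^ 2) _ _).bddAbove_range
  have hwM : ∀ k, a k ^ 2 ≤ M := fun k => hM ⟨k, rfl⟩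
  have hw : ∀ k, 0 ≤ a k ^ 2 := fun k => sq_nonneg _
  have hIoc : ∀ n, Icc 1 n = Ioc 0 n := Icc_add_one_left_eq_Ioc 0
  have hstep : ∀ k, A (k + 1) = A k + a (k + 1) ^ 2 := fun k => by
    rw [hA, hA, sum_Icc_succ_top (by omega)]
  have hC₁ : 0 ≤ C₁ := by simpa using (abs_nonneg _).trans (hf1 1 one_pos)
  have hC₂ : 0 ≤ C₂ := by simpa using (abs_nonneg _).trans (hf2 1 one_pos)
  refine ⟨C₁ * exp Cc * exp M + C₂ * exp (δ * Cc) * exp (δ * M) / δ + M, fun n s hs hs1 => ?_⟩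
  obtain ⟨L, hL0, rfl⟩ : ∃ L, 0 ≤ L ∧ s = exp (-L) :=
    ⟨-log s, neg_nonneg.2 (log_nonpos hs.le hs1), by rw [neg_neg, exp_log hs]⟩
  have hbs : ∀ k, b k * exp (-L) = exp ((A k - L) + c k) := fun k => by
    rw [hb, ← exp_add]; ring_nf
  obtain ⟨N, hNn, hAN, hL⟩ := exists_last_le A L (by simpa [hA] using hL0) n
  have hdecomp : ∑ k ∈ Icc 1 n, a k ^ 2 * f (b k * exp (-L)) - min (log (1 / exp (-L))) (A n)
      = ∑ k ∈ Ioc 0 N, a k ^ 2 * (f (b k * exp (-L)) - 1)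
        + ∑ k ∈ Ioc N n, a k ^ 2 * f (b k * exp (-L)) + (A N - min L (A n)) := by
    rw [one_div, ← exp_neg, neg_neg, log_exp, hA N, hIoc, hIoc,
      ← sum_Ioc_consecutive _ (Nat.zero_le N) hNn]
    simp only [mul_sub, mul_one, sum_sub_distrib]
    ring
  have hhead := abs_sum_Ioc_zero_mul_le hstep hw hwM (mul_nonneg hC₁ (exp_pos _).le)
    (fun k _ => (hbs k).symm ▸ abs_sub_one_le_mul_exp hC₁ hf1 (hc k) _) hAN
  have htail := abs_sum_Ioc_mul_le hδ hstep hw hwM (mul_nonneg hC₂ (exp_pos _).le)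
    (fun k _ => (hbs k).symm ▸ abs_le_mul_exp_neg hC₂ hδ.le hf2 (hc k) _) hL
  rw [hdecomp]
  linarith [abs_add_three (∑ k ∈ Ioc 0 N, a k ^ 2 * (f (b k * exp (-L)) - 1))
    (∑ k ∈ Ioc N n, a k ^ 2 * f (b k * exp (-L))) (A N - min L (A n)),
    abs_sub_min_le hstep hw hwM hNn hAN hL]

theorem stmt_18 (f : ℝ → ℝ) (C₁ C₂ δ : ℝ) (hδ : 0 < δ)
    (hf1 : ∀ t : ℝ, 0 < t → |f t - 1| ≤ C₁ * t)
    (hf2 : ∀ t : ℝ, 0 < t → |f t| ≤ C₂ * t ^ (-δ))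
    (a : ℕ → ℝ) (ha : ∀ k, 0 < a k)
    (halim : Filter.Tendsto a Filter.atTop (nhds 0))
    (A : ℕ → ℝ) (hA : ∀ n, A n = ∑ k ∈ Finset.Icc 1 n, (a k) ^ 2)
    (hdiv : Filter.Tendsto A Filter.atTop Filter.atTop)
    (c : ℕ → ℝ) (Cc : ℝ) (hc : ∀ k, |c k| ≤ Cc)
    (b : ℕ → ℝ) (hb : ∀ k, b k = Real.exp (A k + c k)) :
    ∃ C : ℝ, ∀ n : ℕ, ∀ s : ℝ, 0 < s → s ≤ 1 →
      |(∑ k ∈ Finset.Icc 1 n, (a k) ^ 2 * f (b k * s))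
        - min (Real.log (1 / s)) (A n)| ≤ C :=
  stmt_18_general f C₁ C₂ δ hδ hf1 hf2 a halim A hA c Cc hc b hb
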